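/- arXiv:2512.00184 — 6 statements merged into one kernel-verified Lean document; each statement's English description precedes it below -/
import Mathlib

section
/- For any convex function L : ℝⁿ → ℝ, there exists a Borel measurable map y : ℝⁿ → ℝⁿ such that y(x) ∈ ∂L(x) for every x ∈ ℝⁿ. -/
/-!
The subdifferential ∂L(x) is nonempty, by separating the point (x, L x) from the open convex
strict epigraph of L, and closed; moreover the graph of ∂L is closed, so that
{x | ∂L(x) ∩ K ≠ ∅} is closed for every compact K. A measurable selection is then obtained as
in the Kuratowski–Ryll-Nardzewski theorem: along a dense sequence (dᵢ), choose at step k the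
first index whose closed 2⁻ᵏ-ball meets ∂L(x) inside the ball chosen at the previous step.
These indices depend measurably on x, the chosen centres form a Cauchy sequence, and its limit
lies in the closed set ∂L(x).
-/

open Set Filter Topology Metric TopologicalSpace

/-- The subdifferential of `L` at `x`. -/
def subdiff {n : ℕ} (L : EuclideanSpace ℝ (Fin n) → ℝ) (x : EuclideanSpace ℝ (Fin n)) :
    Set (EuclideanSpace ℝ (Fin n)) :=
  {y | ∀ z, L x + (inner ℝ y (z - x) : ℝ) ≤ L z}

theorem ConvexOn.exists_clm_add_le {E : Type*} [NormedAddCommGroup E] [NormedSpace ℝ E]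
    {L : E → ℝ} (hL : ConvexOn ℝ univ L) (hc : Continuous L) (x : E) :
    ∃ φ : E →L[ℝ] ℝ, ∀ z, L x + φ (z - x) ≤ L z := by
  have hopen : IsOpen {p : E × ℝ | p.1 ∈ univ ∧ L p.1 < p.2} := by
    simpa using isOpen_lt (hc.comp continuous_fst) continuous_snd
  obtain ⟨f, hf⟩ := geometric_hahn_banach_open_point hL.convex_strict_epigraph hopen
    (x := (x, L x)) (by simp)
  set g := f.comp (.inl ℝ E ℝ)
  set c := f (0, 1)
  have hf_apply : ∀ z t, f (z, t) = g z + t * c := fun z t => by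
    rw [show (z, t) = (z, 0) + t • ((0 : E), (1 : ℝ)) by simp, map_add, map_smul, smul_eq_mul]
    rfl
  have hsep : ∀ z t, L z < t → g z + t * c < g x + L x * c := fun z t h => by
    simpa only [hf_apply] using hf (z, t) ⟨mem_univ z, h⟩
  have hc_neg : c < 0 := by linarith [hsep x (L x + 1) (by linarith)]
  -- letting `t ↓ L z` in the strict separation
  have hsupp : ∀ z, g z + L z * c ≤ g x + L x * c := fun z =>
    le_of_tendsto (((Continuous.tendsto (by fun_prop) (L z)).mono_left nhdsWithin_le_nhds :
        Tendsto (fun t => g z + t * c) (𝓝[>] L z) _))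
      (eventually_nhdsWithin_of_forall fun t ht => (hsep z t ht).le)
  refine ⟨(-c)⁻¹ • g, fun z => ?_⟩
  have : (-c)⁻¹ * g (z - x) ≤ L z - L x := by
    rw [inv_mul_le_iff₀ (neg_pos.2 hc_neg), map_sub]
    linarith [hsupp z]
  simpa using this

theorem isClosed_setOf_inter_nonempty_of_isClosed_graph {X Y : Type*} [TopologicalSpace X]
    [TopologicalSpace Y] {F : X → Set Y} (hF : IsClosed {p : X × Y | p.2 ∈ F p.1})
    {K : Set Y} (hK : IsCompact K) : IsClosed {x | (F x ∩ K).Nonempty} := by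
  have : CompactSpace K := isCompact_iff_compactSpace.1 hK
  have hpre : IsClosed {p : X × K | (p.2 : Y) ∈ F p.1} :=
    hF.preimage (continuous_fst.prodMk (continuous_subtype_val.comp continuous_snd))
  convert isClosedMap_fst_of_compactSpace _ hpre using 1
  ext x
  simp [Set.Nonempty, and_comm]

section MeasurableSelection

variable {α Y : Type*} [MetricSpace Y] [SeparableSpace Y] [Nonempty Y]

theorem exists_denseSeq_closedBall_inter_nonempty (s : Set Y) (k : ℕ) :
    ∃ i, s.Nonempty → (s ∩ closedBall (denseSeq Y i) ((1 / 2) ^ k)).Nonempty := by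
  rcases s.eq_empty_or_nonempty with rfl | ⟨y, hy⟩
  · simp
  obtain ⟨i, hi⟩ := (denseRange_denseSeq Y).exists_dist_lt y (by positivity : (0 : ℝ) < (1 / 2) ^ k)
  exact ⟨i, fun _ => ⟨y, hy, mem_closedBall.2 hi.le⟩⟩

open Classical in
noncomputable def firstBallIndex (s : Set Y) (k : ℕ) : ℕ :=
  Nat.find (exists_denseSeq_closedBall_inter_nonempty s k)

theorem inter_closedBall_firstBallIndex_nonempty {s : Set Y} (hs : s.Nonempty) (k : ℕ) :
    (s ∩ closedBall (denseSeq Y (firstBallIndex s k)) ((1 / 2) ^ k)).Nonempty := by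
  classical
  exact Nat.find_spec (exists_denseSeq_closedBall_inter_nonempty s k) hs

theorem measurable_firstBallIndex [MeasurableSpace α] {S : α → Set Y} (k : ℕ)
    (hS : MeasurableSet {x | (S x).Nonempty})
    (hSi : ∀ i, MeasurableSet {x | (S x ∩ closedBall (denseSeq Y i) ((1 / 2) ^ k)).Nonempty}) :
    Measurable fun x => firstBallIndex (S x) k := by
  classical
  refine measurable_find _ fun i => ?_
  simpa only [imp_iff_not_or, ofPred_or, ← compl_ofPred] using hS.compl.union (hSi i)

noncomputable def selectionIndex (F : α → Set Y) : ℕ → α → ℕ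
  | 0, x => firstBallIndex (F x) 0
  | k + 1, x =>
    firstBallIndex (F x ∩ closedBall (denseSeq Y (selectionIndex F k x)) ((1 / 2) ^ k)) (k + 1)

noncomputable def measurableSelection (F : α → Set Y) (x : α) : Y :=
  limUnder atTop fun k => denseSeq Y (selectionIndex F k x)

variable {F : α → Set Y}

theorem inter_closedBall_selectionIndex_nonempty (hne : ∀ x, (F x).Nonempty) (x : α) (k : ℕ) :
    (F x ∩ closedBall (denseSeq Y (selectionIndex F k x)) ((1 / 2) ^ k)
      ∩ closedBall (denseSeq Y (selectionIndex F (k + 1) x)) ((1 / 2) ^ (k + 1))).Nonempty := by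
  refine inter_closedBall_firstBallIndex_nonempty ?_ _
  cases k with
  | zero => exact inter_closedBall_firstBallIndex_nonempty (hne x) 0
  | succ k =>
    exact (inter_closedBall_selectionIndex_nonempty hne x k).mono
      (inter_subset_inter_left _ inter_subset_left)

theorem dist_denseSeq_selectionIndex_succ_le (hne : ∀ x, (F x).Nonempty) (x : α) (k : ℕ) :
    dist (denseSeq Y (selectionIndex F k x)) (denseSeq Y (selectionIndex F (k + 1) x))
      ≤ 2 * (1 / 2) ^ k := by
  obtain ⟨y, ⟨-, hy₁⟩, hy₂⟩ := inter_closedBall_selectionIndex_nonempty hne x k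
  calc _ ≤ dist _ y + dist y _ := dist_triangle _ _ _
    _ ≤ (1 / 2) ^ k + (1 / 2) ^ (k + 1) := add_le_add (mem_closedBall'.1 hy₁) (mem_closedBall.1 hy₂)
    _ ≤ 2 * (1 / 2) ^ k := by rw [pow_succ]; linarith [pow_pos (by norm_num : (0 : ℝ) < 1 / 2) k]

theorem infDist_denseSeq_selectionIndex_le (hne : ∀ x, (F x).Nonempty) (x : α) (k : ℕ) :
    infDist (denseSeq Y (selectionIndex F k x)) (F x) ≤ (1 / 2) ^ k := by
  obtain ⟨y, ⟨hy, hy'⟩, -⟩ := inter_closedBall_selectionIndex_nonempty hne x k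
  exact (infDist_le_dist_of_mem hy).trans (mem_closedBall'.1 hy')

variable [CompleteSpace Y]

theorem tendsto_measurableSelection (hne : ∀ x, (F x).Nonempty) (x : α) :
    Tendsto (fun k => denseSeq Y (selectionIndex F k x)) atTop (𝓝 (measurableSelection F x)) :=
  (cauchySeq_of_le_geometric _ _ (by norm_num)
    (dist_denseSeq_selectionIndex_succ_le hne x)).tendsto_limUnder

theorem measurableSelection_mem (hclosed : ∀ x, IsClosed (F x)) (hne : ∀ x, (F x).Nonempty)
    (x : α) : measurableSelection F x ∈ F x := by
  have hzero : Tendsto (fun k => infDist (denseSeq Y (selectionIndex F k x)) (F x)) atTop (𝓝 0) :=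
    squeeze_zero (fun _ => infDist_nonneg) (infDist_denseSeq_selectionIndex_le hne x)
      (tendsto_pow_atTop_nhds_zero_of_lt_one (by norm_num) (by norm_num))
  have hlim := ((continuous_infDist_pt (F x)).tendsto _).comp (tendsto_measurableSelection hne x)
  exact ((hclosed x).mem_iff_infDist_zero (hne x)).2 (tendsto_nhds_unique hlim hzero)

end MeasurableSelection

section ProperMeasurableSelection

variable {α Y : Type*} [MeasurableSpace α] [MetricSpace Y] [ProperSpace Y] [Nonempty Y]
  {F : α → Set Y}

theorem measurable_selectionIndex
    (hF : ∀ K, IsCompact K → MeasurableSet {x | (F x ∩ K).Nonempty}) (hne : ∀ x, (F x).Nonempty)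
    (k : ℕ) : Measurable (selectionIndex F k) := by
  induction k with
  | zero =>
    exact measurable_firstBallIndex 0 (by simp [hne]) fun i => hF _ (isCompact_closedBall _ _)
  | succ k ih =>
    have hstep : ∀ j, Measurable fun x =>
        firstBallIndex (F x ∩ closedBall (denseSeq Y j) ((1 / 2) ^ k)) (k + 1) := fun j =>
      measurable_firstBallIndex (k + 1) (hF _ (isCompact_closedBall _ _)) fun i => by
        simpa only [inter_assoc] using
          hF _ ((isCompact_closedBall _ _).inter_right isClosed_closedBall)
    exact (measurable_from_prod_countable_left (f := fun p : α × ℕ =>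
      firstBallIndex (F p.1 ∩ closedBall (denseSeq Y p.2) ((1 / 2) ^ k)) (k + 1)) hstep).comp
        (measurable_id.prodMk ih)

theorem measurable_measurableSelection [MeasurableSpace Y] [BorelSpace Y]
    (hF : ∀ K, IsCompact K → MeasurableSet {x | (F x ∩ K).Nonempty}) (hne : ∀ x, (F x).Nonempty) :
    Measurable (measurableSelection F) :=
  measurable_of_tendsto_metrizable
    (fun k => measurable_from_nat.comp (measurable_selectionIndex hF hne k))
    (tendsto_pi_nhds.2 (tendsto_measurableSelection hne))

end ProperMeasurableSelection

section Subdiff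

variable {n : ℕ} {L : EuclideanSpace ℝ (Fin n) → ℝ}

theorem isClosed_graph_subdiff (hc : Continuous L) :
    IsClosed {p : EuclideanSpace ℝ (Fin n) × EuclideanSpace ℝ (Fin n) | p.2 ∈ subdiff L p.1} := by
  simp only [subdiff, mem_ofPred_eq]
  rw [ofPred_forall]
  exact isClosed_iInter fun z => isClosed_le (by fun_prop) (by fun_prop)

theorem isClosed_subdiff (hc : Continuous L) (x : EuclideanSpace ℝ (Fin n)) :
    IsClosed (subdiff L x) :=
  (isClosed_graph_subdiff hc).preimage (continuous_const.prodMk continuous_id)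

theorem subdiff_nonempty (hL : ConvexOn ℝ univ L) (hc : Continuous L)
    (x : EuclideanSpace ℝ (Fin n)) : (subdiff L x).Nonempty := by
  obtain ⟨φ, hφ⟩ := hL.exists_clm_add_le hc x
  refine ⟨(InnerProductSpace.toDual ℝ _).symm φ, fun z => ?_⟩
  simpa only [InnerProductSpace.toDual_symm_apply] using hφ z

end Subdiff

theorem stmt3 {n : ℕ} (L : EuclideanSpace ℝ (Fin n) → ℝ) (hL : ConvexOn ℝ Set.univ L) :
    ∃ y : EuclideanSpace ℝ (Fin n) → EuclideanSpace ℝ (Fin n),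
      Measurable y ∧ ∀ x, y x ∈ subdiff L x := by
  have hc : Continuous L := continuousOn_univ.1 (hL.continuousOn isOpen_univ)
  have hne := subdiff_nonempty hL hc
  have hmeas : ∀ K, IsCompact K → MeasurableSet {x | (subdiff L x ∩ K).Nonempty} := fun K hK =>
    (isClosed_setOf_inter_nonempty_of_isClosed_graph (isClosed_graph_subdiff hc) hK).measurableSet
  exact ⟨measurableSelection (subdiff L), measurable_measurableSelection hmeas hne,
    measurableSelection_mem (isClosed_subdiff hc) hne⟩
end

section
/- Let L : ℝⁿ → ℝ be a convex function, let E ⊆ ℝⁿ be the (full Lebesgue measure) set of points where L is differentiable, and for ε > 0 and x ∈ ℝⁿ let T_ε(x) = (1/|B(x,ε)|) ∫_{B(x,ε) ∩ E} ∇L(z) dz, where B(x,ε) is the Euclidean ball of center x and radius ε and |B(x,ε)| its Lebesgue volume. Suppose that for every x ∈ ℝⁿ the limit y(x) = lim_{ε → 0⁺} T_ε(x) exists. Then y : ℝⁿ → ℝⁿ is a Borel measurable map and y(x) ∈ ∂L(x) for every x ∈ ℝⁿ. -/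
/-!
At a point `w` where `L` is differentiable, the gradient inequality applied to `z` and to the
reflection `2w - x` of `x` gives `⟪∇L w, z - x⟫ ≤ L z + L (2w - x) - 2 L w`. By Rademacher's
theorem this holds almost everywhere; averaging it over `B(x, ε)` and letting `ε → 0`, the
right-hand side, being continuous in `w`, tends to `L z - L x`, so `⟪y x, z - x⟫ ≤ L z - L x`.
Since `L` is differentiable almost everywhere, `T_ε x` is the plain average of `∇L` over the ball,
a measurable function of `x`, and `y` is its pointwise limit as `ε → 0⁺`.
-/

open MeasureTheory

open Metric Set Filter Topology

section Rademacher

variable {E F : Type*} [NormedAddCommGroup E] [NormedSpace ℝ E] [FiniteDimensional ℝ E]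
  [MeasurableSpace E] [BorelSpace E] [NormedAddCommGroup F] [NormedSpace ℝ F]
  [FiniteDimensional ℝ F] (μ : Measure E) [μ.IsAddHaarMeasure]

theorem LocallyLipschitz.ae_differentiableAt {f : E → F} (hf : LocallyLipschitz f) :
    ∀ᵐ x ∂μ, DifferentiableAt ℝ f x := by
  refine measure_null_of_locally_null _ fun x _ => ?_
  obtain ⟨K, t, ht, hK⟩ := hf x
  refine ⟨_, inter_mem_nhdsWithin _ (interior_mem_nhds.2 ht), measure_eq_zero_iff_ae_notMem.2 ?_⟩
  filter_upwards [hK.ae_differentiableWithinAt_of_mem (μ := μ)] with w hw ⟨hwf, hwt⟩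
  exact hwf ((hw (interior_subset hwt)).differentiableAt (mem_interior_iff_mem_nhds.1 hwt))

end Rademacher

theorem ConvexOn.fderiv_apply_sub_le {E : Type*} [NormedAddCommGroup E] [NormedSpace ℝ E]
    {f : E → ℝ} {s : Set E} (hf : ConvexOn ℝ s f) {w z : E} (hw : w ∈ s) (hz : z ∈ s)
    (hd : DifferentiableAt ℝ f w) : fderiv ℝ f w (z - w) ≤ f z - f w := by
  set ℓ : ℝ →ᵃ[ℝ] E := AffineMap.lineMap w z
  have hline : ConvexOn ℝ (ℓ ⁻¹' s) (f ∘ ℓ) := hf.comp_affineMap ℓ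
  have hderiv : HasDerivAt (f ∘ ℓ) (fderiv ℝ f w (z - w)) 0 := by
    refine HasFDerivAt.comp_hasDerivAt (0 : ℝ) ?_ AffineMap.hasDerivAt_lineMap
    simpa [ℓ] using hd.hasFDerivAt
  simpa [ℓ, slope_def_field] using
    hline.le_slope_of_hasDerivAt (by simpa [ℓ] using hw) (by simpa [ℓ] using hz) one_pos hderiv

section Gradient

variable {E : Type*} [NormedAddCommGroup E] [InnerProductSpace ℝ E] [CompleteSpace E]
  {f : E → ℝ}

theorem ConvexOn.inner_gradient_sub_le (hf : ConvexOn ℝ univ f) {w : E}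
    (hd : DifferentiableAt ℝ f w) (z : E) : inner ℝ (gradient f w) (z - w) ≤ f z - f w := by
  rw [inner_gradient_left]
  exact hf.fderiv_apply_sub_le (mem_univ w) (mem_univ z) hd

/-- Unlike `⟪∇f w, z - w⟫ ≤ f z - f w`, the bound is continuous in `w`, which is what survives
averaging over small balls around `x` and passing to the limit. -/
theorem ConvexOn.inner_gradient_sub_le_reflect (hf : ConvexOn ℝ univ f) {w : E}
    (hd : DifferentiableAt ℝ f w) (x z : E) :
    inner ℝ (gradient f w) (z - x) ≤ f z + f (2 • w - x) - 2 * f w := by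
  have hz := hf.inner_gradient_sub_le hd z
  have hreflect := hf.inner_gradient_sub_le hd (2 • w - x)
  have hsplit : z - x = (z - w) + (2 • w - x - w) := by rw [two_smul]; abel
  rw [hsplit, inner_add_right]
  linarith

theorem measurable_gradient [MeasurableSpace E] [BorelSpace E] (f : E → ℝ) :
    Measurable (gradient f) :=
  (InnerProductSpace.toDual ℝ E).symm.continuous.measurable.comp (measurable_fderiv ℝ f)

theorem LocallyLipschitz.locallyIntegrable_gradient [SecondCountableTopology E]
    [MeasurableSpace E] [BorelSpace E] (hf : LocallyLipschitz f)
    (μ : Measure E) [IsLocallyFiniteMeasure μ] : LocallyIntegrable (gradient f) μ := by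
  intro x
  obtain ⟨K, t, ht, hK⟩ := hf x
  refine (μ.finiteAt_nhds x).integrableAtFilter
    (measurable_gradient f).stronglyMeasurable.stronglyMeasurableAtFilter ⟨K, eventually_map.2 ?_⟩
  filter_upwards [eventually_mem_nhds_iff.2 ht] with w hw
  simpa [gradient] using norm_fderiv_le_of_lipschitzOn ℝ hw hK

end Gradient

theorem MeasureTheory.StronglyMeasurable.setIntegral_prodMk_preimage {α β G : Type*}
    [MeasurableSpace α] [MeasurableSpace β]
    [NormedAddCommGroup G] [NormedSpace ℝ G] {ν : Measure β} [SFinite ν] {s : Set (α × β)}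
    (hs : MeasurableSet s) {f : β → G} (hf : StronglyMeasurable f) :
    StronglyMeasurable fun x => ∫ y in Prod.mk x ⁻¹' s, f y ∂ν := by
  have h : (fun x => ∫ y in Prod.mk x ⁻¹' s, f y ∂ν) =
      fun x => ∫ y, s.indicator (f ∘ Prod.snd) (x, y) ∂ν := by
    ext x
    rw [← integral_indicator (measurable_prodMk_left hs)]
    rfl
  rw [h]
  exact ((hf.comp_measurable measurable_snd).indicator hs).integral_prod_right'

section Average

variable {α : Type*} [MetricSpace α] [MeasurableSpace α]

theorem MeasureTheory.LocallyIntegrable.integrableOn_ball [ProperSpace α] {G : Type*}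
    [NormedAddCommGroup G] {μ : Measure α} {f : α → G} (hf : LocallyIntegrable f μ) (x : α)
    (ε : ℝ) : IntegrableOn f (ball x ε) μ :=
  (hf.integrableOn_isCompact (isCompact_closedBall x ε)).mono_set ball_subset_closedBall

theorem measurable_setAverage_ball [SecondCountableTopology α] [OpensMeasurableSpace α]
    {G : Type*} [NormedAddCommGroup G] [NormedSpace ℝ G] [MeasurableSpace G] [BorelSpace G]
    (μ : Measure α) [SFinite μ] {f : α → G} (hf : StronglyMeasurable f) (ε : ℝ) :
    Measurable fun x => ⨍ z in ball x ε, f z ∂μ := by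
  have hs : MeasurableSet {p : α × α | dist p.2 p.1 < ε} :=
    measurableSet_lt (measurable_snd.dist measurable_fst) measurable_const
  simp only [setAverage_eq, Measure.real]
  exact ((measurable_measure_prodMk_left hs).ennreal_toReal.inv.stronglyMeasurable.smul
    (hf.setIntegral_prodMk_preimage hs)).measurable

theorem Continuous.tendsto_setAverage_ball [ProperSpace α] [OpensMeasurableSpace α] (μ : Measure α)
    [IsFiniteMeasureOnCompacts μ] [μ.IsOpenPosMeasure] {f : α → ℝ} (hf : Continuous f) (x : α) :
    Tendsto (fun ε => ⨍ z in ball x ε, f z ∂μ) (𝓝[>] 0) (𝓝 (f x)) := by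
  have hint : ∀ ε, IntegrableOn f (ball x ε) μ :=
    (hf.locallyIntegrable (μ := μ)).integrableOn_ball x
  have hpos : ∀ ε > 0, μ (ball x ε) ≠ 0 := fun ε hε => (measure_ball_pos μ x hε).ne'
  refine tendsto_order.2 ⟨fun a ha => ?_, fun a ha => ?_⟩
  · obtain ⟨r, hr, hball⟩ := eventually_nhds_iff_ball.1 (hf.continuousAt.eventually_const_lt ha)
    filter_upwards [Ioo_mem_nhdsGT hr] with ε hε
    obtain ⟨w, hw, hle⟩ := exists_le_setAverage (hpos ε hε.1) measure_ball_lt_top.ne (hint ε)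
    exact (hball w (ball_subset_ball hε.2.le hw)).trans_le hle
  · obtain ⟨r, hr, hball⟩ := eventually_nhds_iff_ball.1 (hf.continuousAt.eventually_lt_const ha)
    filter_upwards [Ioo_mem_nhdsGT hr] with ε hε
    obtain ⟨w, hw, hle⟩ := exists_setAverage_le (hpos ε hε.1) measure_ball_lt_top.ne (hint ε)
    exact hle.trans_lt (hball w (ball_subset_ball hε.2.le hw))

end Average

section Subgradient

variable {E : Type*} [NormedAddCommGroup E] [InnerProductSpace ℝ E] [FiniteDimensional ℝ E]
  [MeasurableSpace E] [BorelSpace E] (μ : Measure E) [μ.IsAddHaarMeasure] {f : E → ℝ}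

theorem ConvexOn.inner_setAverage_gradient_le (hf : ConvexOn ℝ univ f) (x z : E) (ε : ℝ) :
    inner ℝ (⨍ w in ball x ε, gradient f w ∂μ) (z - x) ≤
      ⨍ w in ball x ε, (f z + f (2 • w - x) - 2 * f w) ∂μ := by
  have hcont : Continuous f := hf.locallyLipschitz.continuous
  have hint : IntegrableOn (gradient f) (ball x ε) μ :=
    (hf.locallyLipschitz.locallyIntegrable_gradient μ).integrableOn_ball x ε
  have hψc : Continuous fun w => f z + f (2 • w - x) - 2 * f w := by fun_prop
  have hψ : IntegrableOn (fun w => f z + f (2 • w - x) - 2 * f w) (ball x ε) μ :=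
    hψc.locallyIntegrable.integrableOn_ball x ε
  rw [setAverage_eq, setAverage_eq, real_inner_smul_left, real_inner_comm, ← integral_inner hint,
    smul_eq_mul]
  refine mul_le_mul_of_nonneg_left
    (setIntegral_mono_ae_restrict (hint.const_inner (z - x)) hψ ?_) (by positivity)
  filter_upwards [ae_restrict_of_ae (hf.locallyLipschitz.ae_differentiableAt μ)] with w hw
  rw [real_inner_comm]
  exact hf.inner_gradient_sub_le_reflect hw x z

theorem ConvexOn.add_inner_le_of_tendsto_setAverage_gradient (hf : ConvexOn ℝ univ f) {x g : E}
    (hg : Tendsto (fun ε => ⨍ w in ball x ε, gradient f w ∂μ) (𝓝[>] 0) (𝓝 g)) (z : E) :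
    f x + inner ℝ g (z - x) ≤ f z := by
  have hcont : Continuous f := hf.locallyLipschitz.continuous
  have hψc : Continuous fun w => f z + f (2 • w - x) - 2 * f w := by fun_prop
  have hψ : Tendsto (fun ε => ⨍ w in ball x ε, (f z + f (2 • w - x) - 2 * f w) ∂μ) (𝓝[>] 0)
      (𝓝 (f z - f x)) := by
    convert hψc.tendsto_setAverage_ball μ x using 2
    rw [two_smul, add_sub_cancel_right]
    ring
  linarith [le_of_tendsto_of_tendsto' (hg.inner tendsto_const_nhds) hψ
    (hf.inner_setAverage_gradient_le μ x z)]

end Subgradient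

theorem stmt5 {n : ℕ} (L : EuclideanSpace ℝ (Fin n) → ℝ) (hL : ConvexOn ℝ Set.univ L)
    (y : EuclideanSpace ℝ (Fin n) → EuclideanSpace ℝ (Fin n))
    (hy : ∀ x : EuclideanSpace ℝ (Fin n), Filter.Tendsto
      (fun ε : ℝ => (volume (Metric.ball x ε)).toReal⁻¹ •
        ∫ z in Metric.ball x ε ∩ {z | DifferentiableAt ℝ L z}, gradient L z)
      (nhdsWithin 0 (Set.Ioi 0)) (nhds (y x))) :
    Measurable y ∧ ∀ x, y x ∈ subdiff L x := by
  have hdiff : {z | DifferentiableAt ℝ L z} =ᵐ[volume] univ :=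
    ae_eq_univ.2 (hL.locallyLipschitz.ae_differentiableAt volume)
  have hT : ∀ x, Tendsto (fun ε => ⨍ z in ball x ε, gradient L z) (𝓝[>] 0) (𝓝 (y x)) := fun x => by
    simpa only [setAverage_eq, Measure.real,
      setIntegral_congr_set (inter_ae_eq_left_of_ae_eq_univ hdiff)] using hy x
  exact ⟨measurable_of_tendsto_metrizable' _
      (fun ε => measurable_setAverage_ball volume (measurable_gradient L).stronglyMeasurable ε)
      (tendsto_pi_nhds.2 hT),
    fun x => hL.add_inner_le_of_tendsto_setAverage_gradient volume (hT x)⟩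
end

section
/- Let L : ℝⁿ → ℝ be a non-negative convex function with L(0) = 0 and L(x) > 0 for x ≠ 0, satisfying the two-sided Δ₂-condition, and let Ψ(r) = Ψ_L(r) = inf_{x ≠ 0} L(rx)/L(x) for r ≥ 0. Then: Ψ(r) = 1/Φ_L(1/r) for r > 0; (c) Ψ is super-multiplicative, i.e. Ψ(rs) ≥ Ψ(r)·Ψ(s) for all r, s ≥ 0; and (d) writing p₋ = Φ_L′(1−) and p₊ = Φ_L′(1+), one has Ψ(r) ≥ r^{p₊} for 0 ≤ r ≤ 1 and Ψ(r) ≥ r^{p₋} for r ≥ 1. -/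
/-! Substituting `y = r • x` turns the ratios `L (r • x) / L x` into the reciprocals of the
ratios `L (r⁻¹ • y) / L y`, so `Ψ(r) = 1 / Φ(1/r)` (convexity and the Δ₂-condition bound these
ratios, so `Φ` is a genuine supremum). Factoring `L (rs • x) / L x` through `L (s • x)`
gives supermultiplicativity of `Ψ`, i.e. superadditivity of `f t = log Ψ(eᵗ)`. For such `f`
with `f 0 = 0`, `f t / t` dominates the slopes `f (t/m) / (t/m)`, which tend to a one-sided
derivative of `f` at `0`; through `Ψ(r) = 1 / Φ(1/r)` these are `p₋` (from the right) and `p₊`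
(from the left), which gives `Ψ(r) ≥ r^{p₋}` for `r ≥ 1` and `Ψ(r) ≥ r^{p₊}` for `r ≤ 1`. -/

open Set Filter Real Topology

/-- The Young function associated to `L`: `Φ_L(r) = sup_{x ≠ 0} L(rx)/L(x)`. -/
noncomputable def PhiL {n : ℕ} (L : EuclideanSpace ℝ (Fin n) → ℝ) (r : ℝ) : ℝ :=
  sSup ((fun x => L (r • x) / L x) '' {x : EuclideanSpace ℝ (Fin n) | x ≠ 0})

/-- The companion function `Ψ_L(r) = inf_{x ≠ 0} L(rx)/L(x)`. -/
noncomputable def PsiL {n : ℕ} (L : EuclideanSpace ℝ (Fin n) → ℝ) (r : ℝ) : ℝ :=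
  sInf ((fun x => L (r • x) / L x) '' {x : EuclideanSpace ℝ (Fin n) | x ≠ 0})

lemma IsLUB.isGLB_image_inv {α : Type*} [Field α] [LinearOrder α] [IsStrictOrderedRing α]
    {s : Set α} {a : α} (h : IsLUB s a) (hs : s ⊆ Ioi 0) (hne : s.Nonempty) :
    IsGLB (Inv.inv '' s) a⁻¹ := by
  obtain ⟨b, hb⟩ := hne
  have ha : 0 < a := (hs hb).trans_le (h.1 hb)
  refine ⟨?_, fun c hc => ?_⟩
  · rintro _ ⟨b, hb, rfl⟩
    exact inv_anti₀ (hs hb) (h.1 hb)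
  rcases le_or_gt c 0 with hc0 | hc0
  · exact hc0.trans (inv_pos.2 ha).le
  have hac : a ≤ c⁻¹ := h.2 fun b hb => (le_inv_comm₀ hc0 (hs hb)).1 (hc ⟨b, hb, rfl⟩)
  exact (le_inv_comm₀ ha hc0).1 hac

lemma nonneg_of_map_zero_of_pos {E : Type*} [Zero E] {L : E → ℝ} (h0 : L 0 = 0)
    (hpos : ∀ x, x ≠ 0 → 0 < L x) (x : E) : 0 ≤ L x := by
  rcases eq_or_ne x 0 with rfl | hx
  exacts [h0.ge, (hpos x hx).le]

section Superadditive

variable {f : ℝ → ℝ}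

lemma natCast_mul_le_of_superadditive (hf : ∀ a b, f a + f b ≤ f (a + b)) (hf0 : f 0 = 0)
    (m : ℕ) (t : ℝ) : m * f t ≤ f (m * t) := by
  induction m with
  | zero => simp [hf0]
  | succ m ih =>
    calc ((m + 1 : ℕ) : ℝ) * f t = m * f t + f t := by push_cast; ring
      _ ≤ f (m * t) + f t := by linarith
      _ ≤ f ((m + 1 : ℕ) * t) := by
        convert hf (m * t) t using 2
        push_cast; ring

/-- Superadditivity makes `f t / t` dominate every slope `f (t / m) / (t / m)`, and these
slopes tend to the right derivative at `0`. -/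
lemma mul_le_of_superadditive_of_hasDerivWithinAt_Ioi {p t : ℝ}
    (hf : ∀ a b, f a + f b ≤ f (a + b)) (hf0 : f 0 = 0) (hp : HasDerivWithinAt f p (Ioi 0) 0)
    (ht : 0 ≤ t) : p * t ≤ f t := by
  rcases ht.eq_or_lt with rfl | ht
  · simp [hf0]
  have hslope : Tendsto (slope f 0) (𝓝[>] 0) (𝓝 p) :=
    (hasDerivWithinAt_iff_tendsto_slope' self_notMem_Ioi).1 hp
  have hseq : Tendsto (fun m : ℕ => t / m) atTop (𝓝[>] 0) :=
    tendsto_nhdsWithin_iff.2 ⟨tendsto_const_div_atTop_nhds_zero_nat t,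
      (eventually_ge_atTop 1).mono fun m hm => div_pos ht (by exact_mod_cast hm)⟩
  have hle : ∀ᶠ m : ℕ in atTop, slope f 0 (t / m) ≤ f t / t := by
    filter_upwards [eventually_ge_atTop 1] with m hm
    have hm : (m : ℝ) ≠ 0 := by positivity
    rw [slope_def_field, hf0, sub_zero, sub_zero, div_div_eq_mul_div,
      div_le_div_iff_of_pos_right ht, mul_comm]
    simpa [mul_div_cancel₀ _ hm] using natCast_mul_le_of_superadditive hf hf0 m (t / m)
  simpa [le_div_iff₀ ht] using le_of_tendsto (hslope.comp hseq) hle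

end Superadditive

section DilationRatios

variable {E : Type*} [AddCommGroup E] [Module ℝ E] {L : E → ℝ} {r : ℝ}

/-- The set `{L (r • x) / L x | x ≠ 0}`, whose supremum and infimum are `Φ_L r` and `Ψ_L r`. -/
def dilationRatios (L : E → ℝ) (r : ℝ) : Set ℝ :=
  (fun x => L (r • x) / L x) '' {x | x ≠ 0}

lemma dilationRatios_nonempty [Nontrivial E] (L : E → ℝ) (r : ℝ) :
    (dilationRatios L r).Nonempty :=
  let ⟨x, hx⟩ := exists_ne (0 : E)
  ⟨_, x, hx, rfl⟩

lemma dilationRatios_zero [Nontrivial E] (h0 : L 0 = 0) : dilationRatios L 0 = {0} := by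
  refine (dilationRatios_nonempty L 0).subset_singleton_iff.1 ?_
  rintro _ ⟨x, -, rfl⟩
  simp [h0]

lemma dilationRatios_one [Nontrivial E] (hpos : ∀ x, x ≠ 0 → 0 < L x) :
    dilationRatios L 1 = {1} := by
  refine (dilationRatios_nonempty L 1).subset_singleton_iff.1 ?_
  rintro _ ⟨x, hx, rfl⟩
  simp [(hpos x hx).ne']

lemma dilationRatios_subset_Ici (hL : ∀ x, 0 ≤ L x) (r : ℝ) : dilationRatios L r ⊆ Ici 0 := by
  rintro _ ⟨x, -, rfl⟩
  exact div_nonneg (hL _) (hL x)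

lemma dilationRatios_subset_Ioi (hpos : ∀ x, x ≠ 0 → 0 < L x) (hr : r ≠ 0) :
    dilationRatios L r ⊆ Ioi 0 := by
  rintro _ ⟨x, hx, rfl⟩
  exact div_pos (hpos _ (smul_ne_zero hr hx)) (hpos x hx)

lemma dilationRatios_eq_image_inv (hr : r ≠ 0) :
    dilationRatios L r = Inv.inv '' dilationRatios L r⁻¹ := by
  ext y
  constructor
  · rintro ⟨x, hx, rfl⟩
    refine ⟨_, ⟨r • x, smul_ne_zero hr hx, rfl⟩, ?_⟩
    simp [smul_smul, hr]
  · rintro ⟨-, ⟨x, hx, rfl⟩, rfl⟩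
    refine ⟨r⁻¹ • x, smul_ne_zero (inv_ne_zero hr) hx, ?_⟩
    simp [smul_smul, hr]

lemma ConvexOn.apply_smul_le_mul (hconv : ConvexOn ℝ univ L) (h0 : L 0 = 0) {t : ℝ}
    (ht0 : 0 ≤ t) (ht1 : t ≤ 1) (x : E) : L (t • x) ≤ t * L x := by
  simpa [h0] using hconv.2 (mem_univ x) (mem_univ 0) ht0 (sub_nonneg.2 ht1) (add_sub_cancel t 1)

lemma ConvexOn.apply_smul_mono (hconv : ConvexOn ℝ univ L) (h0 : L 0 = 0)
    (hL : ∀ x, 0 ≤ L x) {s : ℝ} (hr : 0 ≤ r) (hrs : r ≤ s) (x : E) : L (r • x) ≤ L (s • x) := by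
  rcases (hr.trans hrs).eq_or_lt with rfl | hs
  · rw [le_antisymm hrs hr]
  calc L (r • x) = L ((r / s) • s • x) := by rw [smul_smul, div_mul_cancel₀ _ hs.ne']
    _ ≤ r / s * L (s • x) :=
      hconv.apply_smul_le_mul h0 (div_nonneg hr hs.le) ((div_le_one hs).2 hrs) _
    _ ≤ L (s • x) := mul_le_of_le_one_left (hL _) ((div_le_one hs).2 hrs)

lemma apply_two_pow_smul_le {C : ℝ} (hC : 0 ≤ C) (hΔ : ∀ x, L ((2 : ℝ) • x) ≤ C * L x)
    (k : ℕ) (x : E) : L ((2 : ℝ) ^ k • x) ≤ C ^ k * L x := by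
  induction k with
  | zero => simp
  | succ k ih =>
    calc L ((2 : ℝ) ^ (k + 1) • x) = L ((2 : ℝ) • (2 : ℝ) ^ k • x) := by rw [pow_succ', mul_smul]
      _ ≤ C * (C ^ k * L x) := (hΔ _).trans (mul_le_mul_of_nonneg_left ih hC)
      _ = C ^ (k + 1) * L x := by ring

lemma bddAbove_dilationRatios (hconv : ConvexOn ℝ univ L) (h0 : L 0 = 0) (hL : ∀ x, 0 ≤ L x)
    {C : ℝ} (hΔ : ∀ x, L ((2 : ℝ) • x) ≤ C * L x) (hr : 0 ≤ r) :
    BddAbove (dilationRatios L r) := by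
  have hΔ' : ∀ x, L ((2 : ℝ) • x) ≤ max C 0 * L x := fun x =>
    (hΔ x).trans (mul_le_mul_of_nonneg_right (le_max_left _ _) (hL x))
  obtain ⟨m, hm⟩ := pow_unbounded_of_one_lt r one_lt_two
  refine ⟨max C 0 ^ m, ?_⟩
  rintro _ ⟨x, -, rfl⟩
  refine div_le_of_le_mul₀ (hL x) (by positivity) ?_
  exact (hconv.apply_smul_mono h0 hL hr hm.le x).trans
    (apply_two_pow_smul_le (le_max_right _ _) hΔ' m x)

variable [Nontrivial E]

lemma sSup_dilationRatios_pos (hconv : ConvexOn ℝ univ L) (h0 : L 0 = 0)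
    (hpos : ∀ x, x ≠ 0 → 0 < L x) {C : ℝ} (hΔ : ∀ x, L ((2 : ℝ) • x) ≤ C * L x) (hr : 0 < r) :
    0 < sSup (dilationRatios L r) := by
  obtain ⟨a, ha⟩ := dilationRatios_nonempty L r
  exact (dilationRatios_subset_Ioi hpos hr.ne' ha).trans_le (le_csSup
    (bddAbove_dilationRatios hconv h0 (nonneg_of_map_zero_of_pos h0 hpos) hΔ hr.le) ha)

lemma sInf_dilationRatios_eq_inv_sSup (hconv : ConvexOn ℝ univ L) (h0 : L 0 = 0)
    (hpos : ∀ x, x ≠ 0 → 0 < L x) {C : ℝ}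
    (hΔ : ∀ x, L ((2 : ℝ) • x) ≤ C * L x) (hr : 0 < r) :
    sInf (dilationRatios L r) = (sSup (dilationRatios L r⁻¹))⁻¹ := by
  have hne := dilationRatios_nonempty L r⁻¹
  have hbdd := bddAbove_dilationRatios hconv h0 (nonneg_of_map_zero_of_pos h0 hpos) hΔ
    (inv_nonneg.2 hr.le)
  rw [dilationRatios_eq_image_inv hr.ne']
  exact ((isLUB_csSup hne hbdd).isGLB_image_inv
    (dilationRatios_subset_Ioi hpos (inv_ne_zero hr.ne')) hne).csInf_eq (hne.image _)

lemma sInf_dilationRatios_mul_le (h0 : L 0 = 0)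
    (hpos : ∀ x, x ≠ 0 → 0 < L x) (r s : ℝ) :
    sInf (dilationRatios L r) * sInf (dilationRatios L s) ≤ sInf (dilationRatios L (r * s)) := by
  have hL := nonneg_of_map_zero_of_pos h0 hpos
  rcases eq_or_ne s 0 with rfl | hs
  · simp [dilationRatios_zero h0]
  have hbdd : ∀ r, BddBelow (dilationRatios L r) := fun r =>
    ⟨0, fun _ h => dilationRatios_subset_Ici hL r h⟩
  refine le_csInf (dilationRatios_nonempty L _) ?_
  rintro _ ⟨x, hx, rfl⟩
  have hsx : s • x ≠ 0 := smul_ne_zero hs hx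
  calc sInf (dilationRatios L r) * sInf (dilationRatios L s)
      ≤ L (r • s • x) / L (s • x) * (L (s • x) / L x) :=
        mul_le_mul (csInf_le (hbdd r) ⟨s • x, hsx, rfl⟩) (csInf_le (hbdd s) ⟨x, hx, rfl⟩)
          (Real.sInf_nonneg (dilationRatios_subset_Ici hL s)) (div_nonneg (hL _) (hL _))
    _ = L ((r * s) • x) / L x := by rw [div_mul_div_cancel₀ (hpos _ hsx).ne', mul_smul]

lemma sInf_dilationRatios_le_self (hconv : ConvexOn ℝ univ L) (h0 : L 0 = 0)
    (hpos : ∀ x, x ≠ 0 → 0 < L x) (hr0 : 0 ≤ r) (hr1 : r ≤ 1) :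
    sInf (dilationRatios L r) ≤ r := by
  obtain ⟨x, hx⟩ := exists_ne (0 : E)
  have hbdd : BddBelow (dilationRatios L r) :=
    ⟨0, fun _ h => dilationRatios_subset_Ici (nonneg_of_map_zero_of_pos h0 hpos) r h⟩
  refine (csInf_le hbdd ⟨x, hx, rfl⟩).trans ?_
  exact (div_le_iff₀ (hpos x hx)).2 (hconv.apply_smul_le_mul h0 hr0 hr1 x)

end DilationRatios

lemma hasDerivWithinAt_neg_log_comp_exp_mul {φ : ℝ → ℝ} {p c : ℝ} {s u : Set ℝ}
    (hφ : HasDerivWithinAt φ p s 1) (hφ1 : φ 1 = 1) (hmaps : MapsTo (fun t => exp (c * t)) u s) :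
    HasDerivWithinAt (fun t => -log (φ (exp (c * t)))) (-(p * c)) u 0 := by
  have hexp : HasDerivAt (fun t => exp (c * t)) c 0 := by
    simpa using ((hasDerivAt_id 0).const_mul c).exp
  have hcomp := (HasDerivWithinAt.comp (0 : ℝ) (by simpa using hφ) hexp.hasDerivWithinAt
    hmaps).log (by simp [hφ1])
  simpa [hφ1] using hcomp.fun_neg

section SuperMultiplicative

variable {ψ φ : ℝ → ℝ} {p : ℝ}

/-- On `(0, ∞)` we have `log ψ (exp (c t)) = -log φ (exp (-c t))`: this function of `t` is
superadditive, and its right derivative at `0` comes from a one-sided derivative of `φ` at `1`. -/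
lemma exp_mul_le_of_superMultiplicative {c : ℝ} {s : Set ℝ}
    (hmul : ∀ a b, 0 < a → 0 < b → ψ a * ψ b ≤ ψ (a * b))
    (hψ : ∀ r, 0 < r → ψ r = (φ r⁻¹)⁻¹) (hφpos : ∀ r, 0 < r → 0 < φ r) (hφ1 : φ 1 = 1)
    (hφ : HasDerivWithinAt φ p s 1) (hmaps : MapsTo (fun t => exp (-c * t)) (Ioi 0) s)
    {t : ℝ} (ht : 0 ≤ t) : exp (p * c * t) ≤ ψ (exp (c * t)) := by
  have hψpos : ∀ r, 0 < r → 0 < ψ r := fun r hr => by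
    rw [hψ r hr]; exact inv_pos.2 (hφpos _ (inv_pos.2 hr))
  set f : ℝ → ℝ := fun t => log (ψ (exp (c * t))) with hf
  have hf_eq : f = fun t => -log (φ (exp (-c * t))) := by
    funext t
    simp only [hf]
    rw [hψ _ (exp_pos _), log_inv, ← exp_neg, neg_mul]
  have hsuper : ∀ a b, f a + f b ≤ f (a + b) := fun a b => by
    simp only [hf]
    rw [← log_mul (hψpos _ (exp_pos _)).ne' (hψpos _ (exp_pos _)).ne', mul_add, exp_add]
    exact log_le_log (mul_pos (hψpos _ (exp_pos _)) (hψpos _ (exp_pos _)))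
      (hmul _ _ (exp_pos _) (exp_pos _))
  have hf0 : f 0 = 0 := by simp [hf_eq, hφ1]
  have hderiv : HasDerivWithinAt f (p * c) (Ioi 0) 0 := by
    simpa [hf_eq] using hasDerivWithinAt_neg_log_comp_exp_mul hφ hφ1 hmaps
  exact (le_log_iff_exp_le (hψpos _ (exp_pos _))).1
    (mul_le_of_superadditive_of_hasDerivWithinAt_Ioi hsuper hf0 hderiv ht)

lemma rpow_le_of_superMultiplicative_of_one_le
    (hmul : ∀ a b, 0 < a → 0 < b → ψ a * ψ b ≤ ψ (a * b))
    (hψ : ∀ r, 0 < r → ψ r = (φ r⁻¹)⁻¹) (hφpos : ∀ r, 0 < r → 0 < φ r) (hφ1 : φ 1 = 1)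
    (hφ : HasDerivWithinAt φ p (Iio 1) 1) {r : ℝ} (hr : 1 ≤ r) : r ^ p ≤ ψ r := by
  have hmaps : MapsTo (fun t => exp (-1 * t)) (Ioi 0) (Iio 1) := fun t (ht : 0 < t) => by
    simpa using ht
  have := exp_mul_le_of_superMultiplicative hmul hψ hφpos hφ1 hφ hmaps (log_nonneg hr)
  calc r ^ p = exp (p * 1 * log r) := by rw [rpow_def_of_pos (by linarith)]; ring_nf
    _ ≤ ψ (exp (1 * log r)) := this
    _ = ψ r := by rw [one_mul, exp_log (by linarith)]

lemma rpow_le_of_superMultiplicative_of_le_one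
    (hmul : ∀ a b, 0 < a → 0 < b → ψ a * ψ b ≤ ψ (a * b))
    (hψ : ∀ r, 0 < r → ψ r = (φ r⁻¹)⁻¹) (hφpos : ∀ r, 0 < r → 0 < φ r) (hφ1 : φ 1 = 1)
    (hφ : HasDerivWithinAt φ p (Ioi 1) 1) {r : ℝ} (hr0 : 0 < r) (hr1 : r ≤ 1) :
    r ^ p ≤ ψ r := by
  have hmaps : MapsTo (fun t => exp (-(-1) * t)) (Ioi 0) (Ioi 1) := fun t (ht : 0 < t) => by
    simpa using ht
  have := exp_mul_le_of_superMultiplicative hmul hψ hφpos hφ1 hφ hmaps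
    (neg_nonneg.2 (log_nonpos hr0.le hr1))
  calc r ^ p = exp (p * -1 * -log r) := by rw [rpow_def_of_pos hr0]; ring_nf
    _ ≤ ψ (exp (-1 * -log r)) := this
    _ = ψ r := by rw [neg_one_mul, neg_neg, exp_log hr0]

end SuperMultiplicative

theorem stmt8_general {n : ℕ} (hn : 0 < n) (L : EuclideanSpace ℝ (Fin n) → ℝ)
    (hconv : ConvexOn ℝ Set.univ L) (h0 : L 0 = 0)
    (hpos : ∀ x, x ≠ 0 → 0 < L x)
    (hDelta2 : ∃ C : ℝ, ∀ x : EuclideanSpace ℝ (Fin n), L ((2 : ℝ) • x) ≤ C * L x)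
    (pminus pplus : ℝ)
    (hpminus : HasDerivWithinAt (PhiL L) pminus (Set.Iio 1) 1)
    (hpplus : HasDerivWithinAt (PhiL L) pplus (Set.Ioi 1) 1) :
    (∀ r : ℝ, 0 < r → PsiL L r = 1 / PhiL L r⁻¹) ∧
    (∀ r s : ℝ, 0 ≤ r → 0 ≤ s → PsiL L r * PsiL L s ≤ PsiL L (r * s)) ∧
    (∀ r : ℝ, 0 ≤ r → r ≤ 1 → r ^ pplus ≤ PsiL L r) ∧
    (∀ r : ℝ, 1 ≤ r → r ^ pminus ≤ PsiL L r) := by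
  have : Nonempty (Fin n) := ⟨⟨0, hn⟩⟩
  obtain ⟨C, hΔ⟩ := hDelta2
  have hΨ : ∀ r, 0 < r → PsiL L r = (PhiL L r⁻¹)⁻¹ := fun r hr =>
    sInf_dilationRatios_eq_inv_sSup hconv h0 hpos hΔ hr
  have hΦpos : ∀ r, 0 < r → 0 < PhiL L r := fun r hr =>
    sSup_dilationRatios_pos hconv h0 hpos hΔ hr
  have hΦ1 : PhiL L 1 = 1 := by
    rw [PhiL, ← dilationRatios, dilationRatios_one hpos, csSup_singleton]
  have hmul : ∀ r s, 0 < r → 0 < s → PsiL L r * PsiL L s ≤ PsiL L (r * s) :=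
    fun r s _ _ => sInf_dilationRatios_mul_le h0 hpos r s
  -- `0 ^ pplus = 0` needs `pplus ≠ 0`, which follows from `r ^ pplus ≤ Ψ r ≤ r` at `r = 1/2`.
  have hpplus_ne : pplus ≠ 0 := by
    rintro rfl
    have hlow := rpow_le_of_superMultiplicative_of_le_one hmul hΨ hΦpos hΦ1 hpplus
      (by norm_num : (0 : ℝ) < 1 / 2) (by norm_num)
    have hup : PsiL L (1 / 2) ≤ 1 / 2 :=
      sInf_dilationRatios_le_self hconv h0 hpos (by norm_num) (by norm_num)
    norm_num at hlow
    linarith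
  refine ⟨fun r hr => by rw [one_div, hΨ r hr],
    fun r s _ _ => sInf_dilationRatios_mul_le h0 hpos r s, fun r hr0 hr1 => ?_,
    fun r hr => rpow_le_of_superMultiplicative_of_one_le hmul hΨ hΦpos hΦ1 hpminus hr⟩
  rcases hr0.eq_or_lt with rfl | hr0
  · rw [zero_rpow hpplus_ne]
    exact Real.sInf_nonneg (dilationRatios_subset_Ici (nonneg_of_map_zero_of_pos h0 hpos) 0)
  · exact rpow_le_of_superMultiplicative_of_le_one hmul hΨ hΦpos hΦ1 hpplus hr0 hr1

theorem stmt8 {n : ℕ} (hn : 0 < n) (L : EuclideanSpace ℝ (Fin n) → ℝ)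
    (hconv : ConvexOn ℝ Set.univ L) (hnonneg : ∀ x, 0 ≤ L x) (h0 : L 0 = 0)
    (hpos : ∀ x, x ≠ 0 → 0 < L x)
    (hDelta2 : ∃ C : ℝ, ∀ x : EuclideanSpace ℝ (Fin n), L ((2 : ℝ) • x) ≤ C * L x)
    (pminus pplus : ℝ)
    (hpminus : HasDerivWithinAt (PhiL L) pminus (Set.Iio 1) 1)
    (hpplus : HasDerivWithinAt (PhiL L) pplus (Set.Ioi 1) 1) :
    (∀ r : ℝ, 0 < r → PsiL L r = 1 / PhiL L r⁻¹) ∧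
    (∀ r s : ℝ, 0 ≤ r → 0 ≤ s → PsiL L r * PsiL L s ≤ PsiL L (r * s)) ∧
    (∀ r : ℝ, 0 ≤ r → r ≤ 1 → r ^ pplus ≤ PsiL L r) ∧
    (∀ r : ℝ, 1 ≤ r → r ^ pminus ≤ PsiL L r) :=
  stmt8_general hn L hconv h0 hpos hDelta2 pminus pplus hpminus hpplus
end

section
/- Let L : ℝⁿ → ℝ be a non-negative convex function with L(0) = 0 and L(x) > 0 for x ≠ 0, satisfying the two-sided Δ₂-condition. Then the associated Young function Φ_L is differentiable at the point r = 1 with derivative p = Φ_L′(1) if and only if Φ_L(r) = Ψ_L(r) = r^p for all r ≥ 0, that is, if and only if L is positively homogeneous of order p: L(rx) = r^p·L(x) for all x ∈ ℝⁿ and r ≥ 0. -/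
theorem stmt9 {n : ℕ} (hn : 0 < n) (L : EuclideanSpace ℝ (Fin n) → ℝ)
    (hconv : ConvexOn ℝ Set.univ L) (hnonneg : ∀ x, 0 ≤ L x) (h0 : L 0 = 0)
    (hpos : ∀ x, x ≠ 0 → 0 < L x)
    (hDelta2 : ∃ C : ℝ, ∀ x : EuclideanSpace ℝ (Fin n), L ((2 : ℝ) • x) ≤ C * L x)
    (p : ℝ) :
    HasDerivAt (PhiL L) p 1 ↔
      (∀ r : ℝ, 0 ≤ r → PhiL L r = r ^ p ∧ PsiL L r = r ^ p ∧
        ∀ x : EuclideanSpace ℝ (Fin n), L (r • x) = r ^ p * L x) := by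
  classical
  obtain ⟨C, hC⟩ := hDelta2
  set S : Set (EuclideanSpace ℝ (Fin n)) := {x | x ≠ 0} with hSdef
  -- a fixed nonzero vector
  set x₀ : EuclideanSpace ℝ (Fin n) := EuclideanSpace.single (⟨0, hn⟩ : Fin n) (1 : ℝ) with hx₀def
  have hx₀ : x₀ ≠ 0 := by
    intro h
    have h2 := congrArg (fun v : EuclideanSpace ℝ (Fin n) => v ⟨0, hn⟩) h
    simp [hx₀def, EuclideanSpace.single_apply] at h2
  -- convexity scaling: L(r x) ≤ r L(x) for r ∈ [0,1]
  have hA : ∀ r : ℝ, 0 ≤ r → r ≤ 1 → ∀ x, L (r • x) ≤ r * L x := by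
    intro r hr0 hr1 x
    have h := hconv.2 (Set.mem_univ x) (Set.mem_univ (0 : EuclideanSpace ℝ (Fin n)))
      hr0 (by linarith : (0:ℝ) ≤ 1 - r) (by ring)
    simpa [h0, smul_zero] using h
  -- reverse scaling: r L(x) ≤ L(r x) for r ≥ 1
  have hB : ∀ r : ℝ, 1 ≤ r → ∀ x, r * L x ≤ L (r • x) := by
    intro r hr x
    have hrpos : 0 < r := lt_of_lt_of_le one_pos hr
    have h := hA r⁻¹ (by positivity) (by rw [inv_le_one_iff₀]; right; exact hr) (r • x)
    rw [smul_smul, inv_mul_cancel₀ hrpos.ne', one_smul] at h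
    have h2 := mul_le_mul_of_nonneg_left h hrpos.le
    rwa [← mul_assoc, mul_inv_cancel₀ hrpos.ne', one_mul] at h2
  -- iterated Δ₂
  set C' : ℝ := max C 1 with hC'def
  have hC'1 : (1:ℝ) ≤ C' := le_max_right _ _
  have hC' : ∀ x, L ((2:ℝ) • x) ≤ C' * L x := fun x =>
    (hC x).trans (mul_le_mul_of_nonneg_right (le_max_left _ _) (hnonneg x))
  have hCk : ∀ k : ℕ, ∀ x, L (((2:ℝ) ^ k) • x) ≤ C' ^ k * L x := by
    intro k
    induction k with
    | zero => intro x; simp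
    | succ k ih =>
      intro x
      have harg : ((2:ℝ) ^ (k+1)) • x = (2:ℝ) • (((2:ℝ) ^ k) • x) := by
        rw [smul_smul]; congr 1; ring
      rw [harg]
      calc L ((2:ℝ) • (((2:ℝ) ^ k) • x)) ≤ C' * L (((2:ℝ) ^ k) • x) := hC' _
        _ ≤ C' * (C' ^ k * L x) :=
            mul_le_mul_of_nonneg_left (ih x) (by linarith)
        _ = C' ^ (k+1) * L x := by ring
  -- global upper bound for each scale
  have hBound : ∀ r : ℝ, 0 ≤ r → ∃ M : ℝ, 0 ≤ M ∧ ∀ x, L (r • x) ≤ M * L x := by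
    intro r hr
    obtain ⟨k, hk⟩ := pow_unbounded_of_one_lt r (by norm_num : (1:ℝ) < 2)
    refine ⟨C' ^ k, by positivity, fun x => ?_⟩
    have h2k : (0:ℝ) < 2 ^ k := by positivity
    have harg : r • x = (r / 2 ^ k) • (((2:ℝ) ^ k) • x) := by
      rw [smul_smul, div_mul_cancel₀ _ h2k.ne']
    rw [harg]
    calc L ((r / 2 ^ k) • (((2:ℝ) ^ k) • x))
        ≤ (r / 2 ^ k) * L (((2:ℝ) ^ k) • x) := by
          exact hA _ (by positivity) (by rw [div_le_one h2k]; exact hk.le) _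
      _ ≤ 1 * L (((2:ℝ) ^ k) • x) := by
          apply mul_le_mul_of_nonneg_right _ (hnonneg _)
          rw [div_le_one h2k]; exact hk.le
      _ = L (((2:ℝ) ^ k) • x) := one_mul _
      _ ≤ C' ^ k * L x := hCk k x
  have hne : ∀ r : ℝ, ((fun x => L (r • x) / L x) '' S).Nonempty :=
    fun r => ⟨_, ⟨x₀, hx₀, rfl⟩⟩
  have hbdd : ∀ r : ℝ, 0 ≤ r → BddAbove ((fun x => L (r • x) / L x) '' S) := by
    intro r hr
    obtain ⟨M, hM0, hM⟩ := hBound r hr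
    refine ⟨M, ?_⟩
    rintro y ⟨x, hx, rfl⟩
    rw [div_le_iff₀ (hpos x hx)]
    exact hM x
  have hΦ_le : ∀ r : ℝ, 0 ≤ r → ∀ x, x ≠ 0 → L (r • x) / L x ≤ PhiL L r :=
    fun r hr x hx => le_csSup (hbdd r hr) ⟨x, hx, rfl⟩
  have hΦub : ∀ (r B : ℝ), (∀ x, x ≠ 0 → L (r • x) / L x ≤ B) → PhiL L r ≤ B := by
    intro r B hB'
    apply csSup_le (hne r)
    rintro y ⟨x, hx, rfl⟩
    exact hB' x hx
  have hΦ1 : PhiL L 1 = 1 := by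
    apply le_antisymm
    · exact hΦub 1 1 (fun x hx => by rw [one_smul, div_self (hpos x hx).ne'])
    · have := hΦ_le 1 zero_le_one x₀ hx₀
      rwa [one_smul, div_self (hpos x₀ hx₀).ne'] at this
  have hΦpos : ∀ r : ℝ, 0 < r → 0 < PhiL L r := by
    intro r hr
    have h1 : 0 < L (r • x₀) / L x₀ :=
      div_pos (hpos _ (smul_ne_zero hr.ne' hx₀)) (hpos x₀ hx₀)
    exact lt_of_lt_of_le h1 (hΦ_le r hr.le x₀ hx₀)
  have hΦsmall : ∀ r : ℝ, 0 ≤ r → r ≤ 1 → PhiL L r ≤ r := by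
    intro r hr0 hr1
    apply hΦub
    intro x hx
    rw [div_le_iff₀ (hpos x hx)]
    exact hA r hr0 hr1 x
  have hsubmul : ∀ r s : ℝ, 0 < r → 0 < s → PhiL L (r * s) ≤ PhiL L r * PhiL L s := by
    intro r s hr hs
    apply hΦub
    intro x hx
    have hsx : s • x ≠ 0 := smul_ne_zero hs.ne' hx
    have h1 : L (r • (s • x)) / L (s • x) ≤ PhiL L r := hΦ_le r hr.le _ hsx
    have h2 : L (s • x) / L x ≤ PhiL L s := hΦ_le s hs.le x hx
    have hkey : L ((r * s) • x) / L x = (L (r • (s • x)) / L (s • x)) * (L (s • x) / L x) := by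
      rw [← smul_smul, div_mul_div_cancel₀ (hpos _ hsx).ne']
    rw [hkey]
    exact mul_le_mul h1 h2 (div_nonneg (hnonneg _) (hnonneg _)) (hΦpos r hr).le
  constructor
  · -- forward direction
    intro hd
    set g : ℝ → ℝ := fun t => Real.log (PhiL L (Real.exp t)) with hgdef
    have hg0 : g 0 = 0 := by simp [hgdef, Real.exp_zero, hΦ1]
    have hgd : HasDerivAt g p 0 := by
      have he : HasDerivAt Real.exp 1 0 := by simpa using Real.hasDerivAt_exp 0
      have hd' : HasDerivAt (PhiL L) p (Real.exp 0) := by rwa [Real.exp_zero]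
      have h1 : HasDerivAt (fun t => PhiL L (Real.exp t)) (p * 1) 0 := hd'.comp 0 he
      have hlog : HasDerivAt Real.log (PhiL L (Real.exp 0))⁻¹ (PhiL L (Real.exp 0)) :=
        Real.hasDerivAt_log (by rw [Real.exp_zero, hΦ1]; norm_num)
      have h2 := hlog.comp 0 h1
      have : (PhiL L (Real.exp 0))⁻¹ * (p * 1) = p := by
        rw [Real.exp_zero, hΦ1]; ring
      rw [this] at h2
      exact h2
    have hgsub : ∀ s t : ℝ, g (s + t) ≤ g s + g t := by
      intro s t
      have hps := Real.exp_pos s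
      have hpt := Real.exp_pos t
      have h := hsubmul (Real.exp s) (Real.exp t) hps hpt
      calc g (s + t) = Real.log (PhiL L (Real.exp s * Real.exp t)) := by
            rw [hgdef]; simp [Real.exp_add]
        _ ≤ Real.log (PhiL L (Real.exp s) * PhiL L (Real.exp t)) :=
            Real.log_le_log (hΦpos _ (by positivity)) h
        _ = g s + g t :=
            Real.log_mul (hΦpos _ hps).ne' (hΦpos _ hpt).ne'
    have hiter : ∀ (k : ℕ) (s : ℝ), g ((k : ℝ) * s) ≤ (k : ℝ) * g s := by
      intro k
      induction k with
      | zero => intro s; simp [hg0]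
      | succ k ih =>
        intro s
        have harg : (((k : ℕ) + 1 : ℕ) : ℝ) * s = (k : ℝ) * s + s := by push_cast; ring
        rw [harg]
        have := hgsub ((k : ℝ) * s) s
        have h2 := ih s
        push_cast
        linarith
    have hslope : Filter.Tendsto (fun s => g s / s) (nhdsWithin 0 {(0:ℝ)}ᶜ) (nhds p) := by
      have h := hasDerivAt_iff_tendsto_slope.mp hgd
      have heq : slope g 0 = fun s => g s / s := by
        funext s
        simp [slope, hg0, div_eq_inv_mul]
      rwa [heq] at h
    have hupper : ∀ t : ℝ, g t ≤ p * t := by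
      intro t
      rcases lt_trichotomy t 0 with ht | ht | ht
      · -- t < 0
        have htne : t ≠ 0 := ht.ne
        have hseq : Filter.Tendsto (fun m : ℕ => t / (m + 1)) Filter.atTop
            (nhdsWithin 0 {(0:ℝ)}ᶜ) := by
          apply tendsto_nhdsWithin_of_tendsto_nhds_of_eventually_within
          · exact Filter.Tendsto.div_atTop tendsto_const_nhds
              (Filter.tendsto_atTop_add_const_right _ 1 tendsto_natCast_atTop_atTop)
          · filter_upwards with m
            have hm : ((m:ℝ) + 1) ≠ 0 := by positivity
            simp [div_ne_zero htne hm]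
        have h2 : Filter.Tendsto (fun m : ℕ => g (t / (m + 1)) / (t / (m + 1)))
            Filter.atTop (nhds p) := hslope.comp hseq
        have h3 : ∀ m : ℕ, g (t / (m + 1)) / (t / (m + 1)) ≤ g t / t := by
          intro m
          have hm1 : (0:ℝ) < (m:ℝ) + 1 := by positivity
          have h4 : g t ≤ ((m:ℝ) + 1) * g (t / (m + 1)) := by
            have := hiter (m + 1) (t / (m + 1))
            push_cast at this
            rwa [mul_div_cancel₀ _ (by positivity : ((m:ℝ)+1) ≠ 0)] at this
          have h5 := mul_le_mul_of_nonpos_right h4 (inv_nonpos.mpr ht.le)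
          calc g (t / (m + 1)) / (t / (m + 1)) = ((m:ℝ) + 1) * g (t / (m + 1)) * t⁻¹ := by
                field_simp
            _ ≤ g t * t⁻¹ := h5
            _ = g t / t := (div_eq_mul_inv _ _).symm
        have h6 : p ≤ g t / t := le_of_tendsto h2 (Filter.Eventually.of_forall h3)
        have h7 := mul_le_mul_of_nonpos_right h6 ht.le
        rw [div_mul_cancel₀ _ htne] at h7
        linarith
      · simp [ht, hg0]
      · -- t > 0
        have htne : t ≠ 0 := ht.ne'
        have hseq : Filter.Tendsto (fun m : ℕ => t / (m + 1)) Filter.atTop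
            (nhdsWithin 0 {(0:ℝ)}ᶜ) := by
          apply tendsto_nhdsWithin_of_tendsto_nhds_of_eventually_within
          · exact Filter.Tendsto.div_atTop tendsto_const_nhds
              (Filter.tendsto_atTop_add_const_right _ 1 tendsto_natCast_atTop_atTop)
          · filter_upwards with m
            have hm : ((m:ℝ) + 1) ≠ 0 := by positivity
            simp [div_ne_zero htne hm]
        have h2 : Filter.Tendsto (fun m : ℕ => g (t / (m + 1)) / (t / (m + 1)))
            Filter.atTop (nhds p) := hslope.comp hseq
        have h3 : ∀ m : ℕ, g t / t ≤ g (t / (m + 1)) / (t / (m + 1)) := by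
          intro m
          have hm1 : (0:ℝ) < (m:ℝ) + 1 := by positivity
          have h4 : g t ≤ ((m:ℝ) + 1) * g (t / (m + 1)) := by
            have := hiter (m + 1) (t / (m + 1))
            push_cast at this
            rwa [mul_div_cancel₀ _ (by positivity : ((m:ℝ)+1) ≠ 0)] at this
          have h5 := mul_le_mul_of_nonneg_right h4 (inv_nonneg.mpr ht.le)
          calc g t / t = g t * t⁻¹ := div_eq_mul_inv _ _
            _ ≤ ((m:ℝ) + 1) * g (t / (m + 1)) * t⁻¹ := h5
            _ = g (t / (m + 1)) / (t / (m + 1)) := by field_simp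
        have h6 : g t / t ≤ p := ge_of_tendsto h2 (Filter.Eventually.of_forall h3)
        have h7 := mul_le_mul_of_nonneg_right h6 ht.le
        rw [div_mul_cancel₀ _ htne] at h7
        linarith
    have hEq : ∀ t : ℝ, g t = p * t := by
      intro t
      have h1 := hupper t
      have h2 := hupper (-t)
      have h3 := hgsub t (-t)
      rw [add_neg_cancel, hg0] at h3
      linarith
    have hΦr : ∀ r : ℝ, 0 < r → PhiL L r = r ^ p := by
      intro r hr
      have h1 := hEq (Real.log r)
      rw [hgdef] at h1
      simp only [Real.exp_log hr] at h1
      have h3 : PhiL L r = Real.exp (p * Real.log r) := by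
        rw [← h1, Real.exp_log (hΦpos r hr)]
      rw [h3, Real.rpow_def_of_pos hr, mul_comm]
    have hp1 : (1:ℝ) ≤ p := by
      have hhalf := hΦsmall (1/2) (by norm_num) (by norm_num)
      rw [hΦr (1/2) (by norm_num)] at hhalf
      have : ((1:ℝ)/2) ^ p ≤ ((1:ℝ)/2) ^ (1:ℝ) := by rwa [Real.rpow_one]
      exact (Real.rpow_le_rpow_left_iff_of_base_lt_one (by norm_num) (by norm_num)).mp this
    have hterm : ∀ r : ℝ, 0 < r → ∀ x, x ≠ 0 → L (r • x) / L x = r ^ p := by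
      intro r hr x hx
      have hrx : r • x ≠ 0 := smul_ne_zero hr.ne' hx
      have hLrx := hpos _ hrx
      have hLx := hpos x hx
      have hrp : (0:ℝ) < r ^ p := Real.rpow_pos_of_pos hr p
      apply le_antisymm
      · have := hΦ_le r hr.le x hx
        rwa [hΦr r hr] at this
      · have h4 : L (r⁻¹ • (r • x)) / L (r • x) ≤ r⁻¹ ^ p := by
          rw [← hΦr r⁻¹ (by positivity)]
          exact hΦ_le r⁻¹ (by positivity) _ hrx
        rw [smul_smul, inv_mul_cancel₀ hr.ne', one_smul, Real.inv_rpow hr.le] at h4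
        rw [div_le_iff₀ hLrx] at h4
        rw [le_div_iff₀ hLx]
        have h5 := mul_le_mul_of_nonneg_left h4 hrp.le
        rwa [← mul_assoc, mul_inv_cancel₀ hrp.ne', one_mul] at h5
    have hmain : ∀ r : ℝ, 0 ≤ r →
        ((fun x => L (r • x) / L x) '' S) = {r ^ p} := by
      intro r hr
      rcases eq_or_lt_of_le hr with hr0 | hrpos
      · rw [Set.eq_singleton_iff_unique_mem]
        have hz : (0:ℝ) ^ p = 0 := Real.zero_rpow (by linarith)
        constructor
        · refine ⟨x₀, hx₀, ?_⟩
          simp only [← hr0, hz]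
          simp [h0]
        · rintro y ⟨x, hx, rfl⟩
          simp only [← hr0, hz]
          simp [h0]
      · rw [Set.eq_singleton_iff_unique_mem]
        exact ⟨⟨x₀, hx₀, hterm r hrpos x₀ hx₀⟩,
          by rintro y ⟨x, hx, rfl⟩; exact hterm r hrpos x hx⟩
    intro r hr
    have himg := hmain r hr
    refine ⟨?_, ?_, ?_⟩
    · rw [PhiL, himg, csSup_singleton]
    · rw [PsiL, himg, csInf_singleton]
    · intro x
      by_cases hx : x = 0
      · rw [hx, smul_zero, h0, mul_zero]
      · have : L (r • x) / L x = r ^ p := by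
          have : L (r • x) / L x ∈ ({r ^ p} : Set ℝ) := by
            rw [← himg]; exact ⟨x, hx, rfl⟩
          simpa using this
        rw [← this, div_mul_cancel₀ _ (hpos x hx).ne']
  · -- backward direction
    intro h
    have hev : PhiL L =ᶠ[nhds 1] fun r : ℝ => r ^ p := by
      filter_upwards [Ioi_mem_nhds (show (0:ℝ) < 1 by norm_num)] with r hr
      exact (h r (le_of_lt hr)).1
    have hrp : HasDerivAt (fun r : ℝ => r ^ p) (p * (1:ℝ) ^ (p - 1)) 1 :=
      Real.hasDerivAt_rpow_const (Or.inl one_ne_zero)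
    have hrp' : HasDerivAt (fun r : ℝ => r ^ p) p 1 := by
      simpa using hrp
    exact hrp'.congr_of_eventuallyEq hev
end

section
/- Fix p ≥ 1 and let V(r) = r^p·log(1 + r) for r ≥ 0. Then the associated Young function Φ_V(r) = sup_{s > 0} V(rs)/V(s) equals r^p·max(r, 1) for all r ≥ 0; that is, Φ_V(r) = r^{p+1} for r ≥ 1 and Φ_V(r) = r^p for 0 ≤ r ≤ 1. -/
/-!
Since `(r s)^p = r^p s^p`, the ratio `V(r s) / V(s)` is `r^p` times `log (1 + r s) / log (1 + s)`,
so it suffices to show that the latter has supremum `max r 1` over `s > 0`. It is bounded by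
`max r 1`: for `r ≤ 1` by monotonicity of `log`, for `r ≥ 1` by Bernoulli's inequality
`1 + r s ≤ (1 + s)^r`. The bound is approached as `s → 0⁺`, where the ratio tends to the ratio
`r` of the derivatives at `0`, and as `s → ∞`, where both logarithms grow like `log s` and the
ratio tends to `1`.
-/

open Real Filter Set Topology Pointwise

theorem tendsto_div_of_hasDerivAt_of_eq_zero {f g : ℝ → ℝ} {a b x : ℝ} (hf : HasDerivAt f a x)
    (hg : HasDerivAt g b x) (hfx : f x = 0) (hgx : g x = 0) (hb : b ≠ 0) :
    Tendsto (fun y => f y / g y) (𝓝[≠] x) (𝓝 (a / b)) := by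
  have hslope :=
    (hasDerivAt_iff_tendsto_slope.mp hf).div (hasDerivAt_iff_tendsto_slope.mp hg) hb
  refine hslope.congr' ?_
  filter_upwards [self_mem_nhdsWithin] with y hy
  have hyx : y - x ≠ 0 := sub_ne_zero.mpr hy
  rw [Pi.div_apply, slope_def_field, slope_def_field, hfx, hgx, sub_zero, sub_zero,
    div_div_div_cancel_right₀ hyx]

theorem hasDerivAt_log_one_add_mul (r : ℝ) : HasDerivAt (fun s => log (1 + r * s)) r 0 := by
  have hlin : HasDerivAt (fun s => 1 + r * s) r 0 := by
    simpa using ((hasDerivAt_id (0 : ℝ)).const_mul r).const_add 1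
  simpa using hlin.log (by simp)

theorem tendsto_log_one_add_mul_div_log_one_add_nhdsGT (r : ℝ) :
    Tendsto (fun s => log (1 + r * s) / log (1 + s)) (𝓝[>] 0) (𝓝 r) := by
  have hlog : HasDerivAt (fun s => log (1 + s)) 1 0 := by
    simpa using hasDerivAt_log_one_add_mul 1
  have hlim := tendsto_div_of_hasDerivAt_of_eq_zero (hasDerivAt_log_one_add_mul r) hlog
    (by simp) (by simp) one_ne_zero
  rw [div_one] at hlim
  exact hlim.mono_left (nhdsGT_le_nhdsNE 0)

theorem tendsto_log_one_add_mul_sub_log_one_add_atTop {r : ℝ} (hr : 0 < r) :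
    Tendsto (fun s => log (1 + r * s) - log (1 + s)) atTop (𝓝 (log r)) := by
  have hlim :=
    ((tendsto_log_comp_add_sub_log r⁻¹).sub (tendsto_log_comp_add_sub_log 1)).const_add (log r)
  rw [sub_zero, add_zero] at hlim
  refine hlim.congr' ?_
  filter_upwards [eventually_gt_atTop 0] with s hs
  have hrs : 1 + r * s = r * (s + r⁻¹) := by field_simp; ring
  rw [hrs, log_mul hr.ne' (by positivity), add_comm 1 s]
  ring

theorem tendsto_log_one_add_mul_div_log_one_add_atTop {r : ℝ} (hr : 0 < r) :
    Tendsto (fun s => log (1 + r * s) / log (1 + s)) atTop (𝓝 1) := by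
  have hden : Tendsto (fun s : ℝ => log (1 + s)) atTop atTop :=
    tendsto_log_atTop.comp (tendsto_atTop_add_const_left _ 1 tendsto_id)
  have hlim := ((tendsto_log_one_add_mul_sub_log_one_add_atTop hr).div_atTop hden).const_add 1
  rw [add_zero] at hlim
  refine hlim.congr' ?_
  filter_upwards [eventually_gt_atTop 0] with s hs
  have hlog : log (1 + s) ≠ 0 := (log_pos (by linarith)).ne'
  field_simp
  ring

theorem log_one_add_mul_le_max_mul_log_one_add {r s : ℝ} (hr : 0 ≤ r) (hs : 0 ≤ s) :
    log (1 + r * s) ≤ max r 1 * log (1 + s) := by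
  rcases le_total r 1 with hr1 | hr1
  · rw [max_eq_right hr1, one_mul]
    exact log_le_log (by positivity) (by nlinarith)
  · rw [max_eq_left hr1, ← log_rpow (by linarith)]
    exact log_le_log (by positivity) (one_add_mul_self_le_rpow_one_add (by linarith) hr1)

theorem isLUB_log_one_add_mul_div_log_one_add {r : ℝ} (hr : 0 < r) :
    IsLUB ((fun s => log (1 + r * s) / log (1 + s)) '' Ioi 0) (max r 1) := by
  refine isLUB_of_mem_closure ?_ ?_
  · rintro _ ⟨s, hs, rfl⟩
    rw [mem_Ioi] at hs
    exact (div_le_iff₀ (log_pos (by linarith))).mpr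
      (log_one_add_mul_le_max_mul_log_one_add hr.le hs.le)
  · rcases le_total r 1 with hr1 | hr1
    · rw [max_eq_right hr1]
      exact mem_closure_of_tendsto (tendsto_log_one_add_mul_div_log_one_add_atTop hr)
        ((eventually_gt_atTop 0).mono fun s hs => mem_image_of_mem _ hs)
    · rw [max_eq_left hr1]
      exact mem_closure_of_tendsto (tendsto_log_one_add_mul_div_log_one_add_nhdsGT r)
        (eventually_mem_nhdsWithin.mono fun s hs => mem_image_of_mem _ hs)

theorem rpow_mul_log_div_rpow_mul_log {p r s : ℝ} (hr : 0 ≤ r) (hs : 0 < s) :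
    (r * s) ^ p * log (1 + r * s) / (s ^ p * log (1 + s)) =
      r ^ p * (log (1 + r * s) / log (1 + s)) := by
  rw [mul_rpow hr hs.le, mul_assoc, mul_div_assoc, mul_div_mul_left _ _ (rpow_pos_of_pos hs p).ne']

/-- For `V(s) = s^p log(1+s)`, the associated Young function
`Φ_V(r) = sup_{s>0} V(rs)/V(s)` equals `r^p · max(r, 1)`. -/
theorem stmt13 (p : ℝ) (hp : 1 ≤ p) (r : ℝ) (hr : 0 ≤ r) :
    sSup ((fun s : ℝ => ((r * s) ^ p * Real.log (1 + r * s)) /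
      (s ^ p * Real.log (1 + s))) '' Set.Ioi 0) = r ^ p * max r 1 := by
  have himage : (fun s : ℝ => ((r * s) ^ p * log (1 + r * s)) / (s ^ p * log (1 + s))) '' Ioi 0 =
      r ^ p • ((fun s => log (1 + r * s) / log (1 + s)) '' Ioi 0) := by
    rw [← image_smul, image_image]
    exact image_congr fun s hs => rpow_mul_log_div_rpow_mul_log hr hs
  rw [himage, Real.sSup_smul_of_nonneg (rpow_nonneg hr p), smul_eq_mul]
  rcases hr.eq_or_lt with rfl | hr
  · simp [zero_rpow (zero_lt_one.trans_le hp).ne']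
  · rw [(isLUB_log_one_add_mul_div_log_one_add hr).csSup_eq (image_nonempty.mpr nonempty_Ioi)]
end

section
/- Let L : ℝⁿ → [0, ∞] be a convex function finite in a neighborhood of zero with L(0) = 0 and L(x) > 0 for x ≠ 0, let L₀ : ℝⁿ → [0, ∞) be a convex function with L₀(0) = 0, L₀(x) > 0 for x ≠ 0, satisfying L₀(x)/|x| → ∞ as |x| → ∞, and set L_ε = L + ε·L₀ for ε > 0. Let (Ω, 𝔐, λ) be a probability space and u : Ω → ℝⁿ measurable. Then ‖u‖_{L(λ)} ≤ ‖u‖_{L_ε(λ)} for all ε > 0, and if u is bounded then ‖u‖_{L_ε(λ)} decreases monotonically to ‖u‖_{L(λ)} as ε ↓ 0. -/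
open MeasureTheory
open scoped ENNReal

/-- Convexity for an `[0, ∞]`-valued function on `ℝⁿ`. -/
def ConvexE {n : ℕ} (L : EuclideanSpace ℝ (Fin n) → ℝ≥0∞) : Prop :=
  ∀ x y : EuclideanSpace ℝ (Fin n), ∀ a b : ℝ, 0 ≤ a → 0 ≤ b → a + b = 1 →
    L (a • x + b • y) ≤ ENNReal.ofReal a * L x + ENNReal.ofReal b * L y

/-- The Luxemburg pseudo-norm `‖u‖_L = inf{r > 0 : ∫ L(u/r) dλ ≤ 1}` (equal to `∞` when no
such `r` exists). -/
noncomputable def lux {n : ℕ} {Ω : Type*} [MeasurableSpace Ω] (μ : Measure Ω)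
    (L : EuclideanSpace ℝ (Fin n) → ℝ≥0∞) (u : Ω → EuclideanSpace ℝ (Fin n)) : ℝ≥0∞ :=
  sInf (ENNReal.ofReal '' {r : ℝ | 0 < r ∧ ∫⁻ ω, L (r⁻¹ • u ω) ∂μ ≤ 1})

/-!
Since `L ≤ L_ε`, and `L_ε` increases with `ε`, the Luxemburg pseudo-norms are ordered as claimed.
For the limit, take `r` with `∫ L(u/r) ≤ 1` and any `s > r`. Convexity and `L 0 = 0` give
`L(u/s) ≤ (r/s) L(u/r)`, while for bounded `u` the values `u/s` lie in a bounded set, on which the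
convex (hence continuous) `L₀` is bounded by some `C`. So `∫ L_ε(u/s) ≤ r/s + ε C ≤ 1` for small
`ε`, i.e. `‖u‖_{L_ε} ≤ s`.
-/

open Filter Set Topology

lemma ConvexE.apply_smul_le {n : ℕ} {L : EuclideanSpace ℝ (Fin n) → ℝ≥0∞} (hL : ConvexE L)
    (h0 : L 0 = 0) {t : ℝ} (ht₀ : 0 ≤ t) (ht₁ : t ≤ 1) (x : EuclideanSpace ℝ (Fin n)) :
    L (t • x) ≤ ENNReal.ofReal t * L x := by
  simpa [h0] using hL x 0 t (1 - t) ht₀ (sub_nonneg.2 ht₁) (add_sub_cancel t 1)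

lemma ConvexOn.bddAbove_image_of_isBounded {E : Type*} [NormedAddCommGroup E] [NormedSpace ℝ E]
    [FiniteDimensional ℝ E] {f : E → ℝ} (hf : ConvexOn ℝ univ f) {S : Set E}
    (hS : Bornology.IsBounded S) : BddAbove (f '' S) :=
  (hS.isCompact_closure.bddAbove_image
    ((hf.continuousOn isOpen_univ).mono (subset_univ _))).mono (image_mono subset_closure)

section Luxemburg

variable {n : ℕ} {Ω : Type*} [MeasurableSpace Ω] (μ : Measure Ω)
  {L : EuclideanSpace ℝ (Fin n) → ℝ≥0∞} {u : Ω → EuclideanSpace ℝ (Fin n)}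

lemma lux_mono {L' : EuclideanSpace ℝ (Fin n) → ℝ≥0∞} (h : L ≤ L') : lux μ L u ≤ lux μ L' u := by
  refine sInf_le_sInf (image_mono ?_)
  rintro r ⟨hr, hint⟩
  exact ⟨hr, (lintegral_mono fun ω => h _).trans hint⟩

lemma lux_le_ofReal {s : ℝ} (hs : 0 < s) (h : ∫⁻ ω, L (s⁻¹ • u ω) ∂μ ≤ 1) :
    lux μ L u ≤ ENNReal.ofReal s :=
  sInf_le ⟨s, ⟨hs, h⟩, rfl⟩

lemma exists_lt_of_lux_lt {b : ℝ≥0∞} (h : lux μ L u < b) :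
    ∃ r s : ℝ, 0 < r ∧ r < s ∧ ∫⁻ ω, L (r⁻¹ • u ω) ∂μ ≤ 1 ∧ ENNReal.ofReal s < b := by
  obtain ⟨_, ⟨r, ⟨hr, hint⟩, rfl⟩, hrb⟩ := sInf_lt_iff.1 h
  obtain ⟨s, -, hrs, hsb⟩ := ENNReal.lt_iff_exists_real_btwn.1 hrb
  exact ⟨r, s, hr, (ENNReal.ofReal_lt_ofReal_iff'.1 hrs).1, hint, hsb⟩

lemma lintegral_add_smul_le (hL : ConvexE L) (h0 : L 0 = 0) {r s : ℝ} (hr : 0 < r) (hrs : r ≤ s)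
    {G : EuclideanSpace ℝ (Fin n) → ℝ≥0∞} {c : ℝ≥0∞} (hG : ∀ ω, G (s⁻¹ • u ω) ≤ c) :
    ∫⁻ ω, (L (s⁻¹ • u ω) + G (s⁻¹ • u ω)) ∂μ ≤
      ENNReal.ofReal (r / s) * ∫⁻ ω, L (r⁻¹ • u ω) ∂μ + c * μ univ := by
  have hs : 0 < s := hr.trans_le hrs
  have hL_le : ∀ ω, L (s⁻¹ • u ω) ≤ ENNReal.ofReal (r / s) * L (r⁻¹ • u ω) := fun ω => by
    have hscale : (r / s) • r⁻¹ • u ω = s⁻¹ • u ω := by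
      rw [smul_smul, div_mul_eq_mul_div, mul_inv_cancel₀ hr.ne', one_div]
    simpa only [hscale] using
      hL.apply_smul_le h0 (by positivity) ((div_le_one hs).2 hrs) (r⁻¹ • u ω)
  calc ∫⁻ ω, (L (s⁻¹ • u ω) + G (s⁻¹ • u ω)) ∂μ
      ≤ ∫⁻ ω, (ENNReal.ofReal (r / s) * L (r⁻¹ • u ω) + c) ∂μ :=
        lintegral_mono fun ω => add_le_add (hL_le ω) (hG ω)
    _ = ENNReal.ofReal (r / s) * ∫⁻ ω, L (r⁻¹ • u ω) ∂μ + c * μ univ := by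
        rw [lintegral_add_right _ measurable_const, lintegral_const_mul' _ _ ENNReal.ofReal_ne_top,
          lintegral_const]

lemma tendsto_lux_add_smul [IsFiniteMeasure μ] (hL : ConvexE L) (h0 : L 0 = 0)
    {L₀ : EuclideanSpace ℝ (Fin n) → ℝ} (hL₀ : ConvexOn ℝ univ L₀)
    (hu : Bornology.IsBounded (range u)) :
    Tendsto (fun ε : ℝ => lux μ (fun z => L z + ENNReal.ofReal (ε * L₀ z)) u) (𝓝[>] 0)
      (𝓝 (lux μ L u)) := by
  rw [tendsto_order]
  refine ⟨fun b hb => Eventually.of_forall fun ε =>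
    hb.trans_le (lux_mono μ fun _ => le_self_add), fun b hb => ?_⟩
  obtain ⟨r, s, hr, hrs, hint, hsb⟩ := exists_lt_of_lux_lt μ hb
  have hs : 0 < s := hr.trans hrs
  obtain ⟨C, hC⟩ := hL₀.bddAbove_image_of_isBounded (smul_set_range s⁻¹ u ▸ hu.smul₀ s⁻¹)
  have hsmall : ∀ᶠ ε in 𝓝[>] (0 : ℝ),
      ENNReal.ofReal (r / s) * 1 + ENNReal.ofReal (ε * C) * μ univ < 1 := by
    have hlim : Tendsto (fun ε : ℝ => ENNReal.ofReal (r / s) * 1 + ENNReal.ofReal (ε * C) * μ univ)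
        (𝓝 0) (𝓝 (ENNReal.ofReal (r / s) * 1 + 0 * μ univ)) :=
      tendsto_const_nhds.add (ENNReal.Tendsto.mul_const
        (by simpa using ENNReal.tendsto_ofReal ((continuous_mul_const C).tendsto 0))
        (.inr (measure_ne_top μ univ)))
    refine (tendsto_nhdsWithin_of_tendsto_nhds hlim).eventually_lt_const ?_
    rw [zero_mul, add_zero, mul_one, ENNReal.ofReal_lt_one]
    exact (div_lt_one hs).2 hrs
  filter_upwards [hsmall, self_mem_nhdsWithin] with ε hε (hε₀ : 0 < ε)
  refine (lux_le_ofReal μ hs ?_).trans_lt hsb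
  have hG : ∀ ω, ENNReal.ofReal (ε * L₀ (s⁻¹ • u ω)) ≤ ENNReal.ofReal (ε * C) := fun ω =>
    ENNReal.ofReal_le_ofReal
      (mul_le_mul_of_nonneg_left (hC ⟨_, mem_range_self ω, rfl⟩) hε₀.le)
  calc _ ≤ _ := lintegral_add_smul_le μ hL h0 hr hrs.le (G := fun z => ENNReal.ofReal (ε * L₀ z))
        hG
    _ ≤ ENNReal.ofReal (r / s) * 1 + ENNReal.ofReal (ε * C) * μ univ := by gcongr
    _ ≤ 1 := hε.le

end Luxemburg

theorem stmt18_general {n : ℕ} {Ω : Type*} [MeasurableSpace Ω] (μ : Measure Ω)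
    [IsProbabilityMeasure μ] (L : EuclideanSpace ℝ (Fin n) → ℝ≥0∞)
    (hconv : ConvexE L) (h0 : L 0 = 0)
    (L0 : EuclideanSpace ℝ (Fin n) → ℝ) (hL0conv : ConvexOn ℝ Set.univ L0)
    (hL0nonneg : ∀ x, 0 ≤ L0 x)
    (u : Ω → EuclideanSpace ℝ (Fin n)) :
    (∀ ε : ℝ, 0 < ε →
      lux μ L u ≤ lux μ (fun z => L z + ENNReal.ofReal (ε * L0 z)) u) ∧
    ((∃ M : ℝ, ∀ ω : Ω, ‖u ω‖ ≤ M) →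
      (∀ ε₁ ε₂ : ℝ, 0 < ε₁ → ε₁ ≤ ε₂ →
        lux μ (fun z => L z + ENNReal.ofReal (ε₁ * L0 z)) u ≤
          lux μ (fun z => L z + ENNReal.ofReal (ε₂ * L0 z)) u) ∧
      Filter.Tendsto (fun ε : ℝ => lux μ (fun z => L z + ENNReal.ofReal (ε * L0 z)) u)
        (nhdsWithin 0 (Set.Ioi 0)) (nhds (lux μ L u))) := by
  refine ⟨fun ε _ => lux_mono μ fun _ => le_self_add, fun ⟨M, hM⟩ => ⟨?_, ?_⟩⟩
  · intro ε₁ ε₂ _ h12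
    exact lux_mono μ (fun z => add_le_add le_rfl
      (ENNReal.ofReal_le_ofReal (mul_le_mul_of_nonneg_right h12 (hL0nonneg z))))
  · exact tendsto_lux_add_smul μ hconv h0 hL0conv
      (isBounded_iff_forall_norm_le.2 ⟨M, forall_mem_range.2 hM⟩)

theorem stmt18 {n : ℕ} {Ω : Type*} [MeasurableSpace Ω] (μ : Measure Ω)
    [IsProbabilityMeasure μ] (L : EuclideanSpace ℝ (Fin n) → ℝ≥0∞)
    (hconv : ConvexE L) (h0 : L 0 = 0) (hpos : ∀ x, x ≠ 0 → 0 < L x)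
    (hfin : ∃ δ : ℝ, 0 < δ ∧ ∀ x : EuclideanSpace ℝ (Fin n), ‖x‖ < δ → L x ≠ ⊤)
    (L0 : EuclideanSpace ℝ (Fin n) → ℝ) (hL0conv : ConvexOn ℝ Set.univ L0)
    (hL0nonneg : ∀ x, 0 ≤ L0 x) (hL00 : L0 0 = 0) (hL0pos : ∀ x, x ≠ 0 → 0 < L0 x)
    (hgrowth : ∀ M : ℝ, ∃ R : ℝ, ∀ x : EuclideanSpace ℝ (Fin n), R ≤ ‖x‖ →
      M ≤ L0 x / ‖x‖)
    (u : Ω → EuclideanSpace ℝ (Fin n)) (hu : Measurable u) :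
    (∀ ε : ℝ, 0 < ε →
      lux μ L u ≤ lux μ (fun z => L z + ENNReal.ofReal (ε * L0 z)) u) ∧
    ((∃ M : ℝ, ∀ ω : Ω, ‖u ω‖ ≤ M) →
      (∀ ε₁ ε₂ : ℝ, 0 < ε₁ → ε₁ ≤ ε₂ →
        lux μ (fun z => L z + ENNReal.ofReal (ε₁ * L0 z)) u ≤
          lux μ (fun z => L z + ENNReal.ofReal (ε₂ * L0 z)) u) ∧
      Filter.Tendsto (fun ε : ℝ => lux μ (fun z => L z + ENNReal.ofReal (ε * L0 z)) u)
        (nhdsWithin 0 (Set.Ioi 0)) (nhds (lux μ L u))) :=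
  stmt18_general μ L hconv h0 L0 hL0conv hL0nonneg u
end
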